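/- Suppose the set 𝓜 of optimal codebooks is finite and nonempty, and that no optimal codebook has support strictly contained in the support of another optimal codebook, i.e. for every c* ∈ 𝓜 and every c ∈ C^k with S(c) ⊊ S(c*) one has R(c) > R(c*). Then there exists a constant κ₀'' > 0 such that for every c* ∈ 𝓜 and every c ∈ C^k with S(c) ⊊ S(c*), ‖c − c*‖² ≤ κ₀'' ℓ(c, c*). -/

import Mathlib

/-! The distortion is Lipschitz on `C^k`, since `P` has bounded support, and the set
`{c ∈ C^k | S(c) ⊆ S}` is compact, so Assumption 1 yields for each `c* ∈ 𝓜` and each `S ⊊ S(c*)` a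
gap `ε > 0` with `ℓ(c, c*) ≥ ε` whenever `S(c) ⊆ S`. There are finitely many such pairs, so one `ε`
works for all of them, and as `‖c − c*‖² ≤ D` on `C^k`, `κ₀'' = (D + 1) / ε` will do. -/

open MeasureTheory ProbabilityTheory Real Matrix Filter

noncomputable section

/-- The k-means contrast: `γ(c, x) = min_j ‖x − c_j‖²`. -/
def gammaF {d k : ℕ} (c : Fin k → EuclideanSpace ℝ (Fin d))
    (x : EuclideanSpace ℝ (Fin d)) : ℝ :=
  ⨅ j, ‖x - c j‖ ^ 2

/-- The distortion `R(c) = ∫ min_j ‖x − c_j‖² dP(x)`. -/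
def distortion {d k : ℕ} (P : Measure (EuclideanSpace ℝ (Fin d)))
    (c : Fin k → EuclideanSpace ℝ (Fin d)) : ℝ :=
  ∫ x, gammaF c x ∂P

/-- The constraint set `C^k`, where `C = ∏_p [−M_p, M_p]`. -/
def Ck {d : ℕ} (k : ℕ) (Mb : Fin d → ℝ) : Set (Fin k → EuclideanSpace ℝ (Fin d)) :=
  {c | ∀ j p, |c j p| ≤ Mb p}

/-- `‖c^{(p)}‖`, the Euclidean norm of the vector of p-th coordinates of the code points. -/
def coordNorm {d k : ℕ} (c : Fin k → EuclideanSpace ℝ (Fin d)) (p : Fin d) : ℝ :=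
  Real.sqrt (∑ j, (c j p) ^ 2)

/-- The penalty `I_w(c) = ∑_p w_p ‖c^{(p)}‖`. -/
def pen {d k : ℕ} (w : Fin d → ℝ) (c : Fin k → EuclideanSpace ℝ (Fin d)) : ℝ :=
  ∑ p, w p * coordNorm c p

/-- The support `S(c) = {p : c^{(p)} ≠ 0}`. -/
def supp {d k : ℕ} (c : Fin k → EuclideanSpace ℝ (Fin d)) : Set (Fin d) :=
  {p | ∃ j, c j p ≠ 0}

/-- Squared Euclidean distance `‖c − c'‖²` between codebooks, seen as kd-dimensional vectors. -/
def distsq {d k : ℕ} (c c' : Fin k → EuclideanSpace ℝ (Fin d)) : ℝ :=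
  ∑ j, ‖c j - c' j‖ ^ 2

/-- The empirical distortion `P_n γ(c, ·)` associated with the sample `X`. -/
def empRisk {d k n : ℕ} (X : Fin n → EuclideanSpace ℝ (Fin d))
    (c : Fin k → EuclideanSpace ℝ (Fin d)) : ℝ :=
  (1 : ℝ) / n * ∑ i, gammaF c (X i)

/-- The set `𝓜` of optimal codebooks (global minimizers of the distortion). -/
def optSet {d : ℕ} (P : Measure (EuclideanSpace ℝ (Fin d))) (k : ℕ) :
    Set (Fin k → EuclideanSpace ℝ (Fin d)) :=
  {cs | ∀ c : Fin k → EuclideanSpace ℝ (Fin d), distortion P cs ≤ distortion P c}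

/-- `‖w_{S(c)}‖² = ∑_{p ∈ S(c)} w_p²`. -/
def wnormsq {d k : ℕ} (w : Fin d → ℝ) (c : Fin k → EuclideanSpace ℝ (Fin d)) : ℝ :=
  ∑ p, (supp c).indicator (fun q => (w q) ^ 2) p

open Topology

lemma IsCompact.eventually_forall_add_le_of_lt {X : Type*} [TopologicalSpace X] {K : Set X}
    (hK : IsCompact K) {f : X → ℝ} (hf : ContinuousOn f K) {r : ℝ} (hr : ∀ x ∈ K, r < f x) :
    ∀ᶠ ε in 𝓝[>] 0, ∀ x ∈ K, r + ε ≤ f x := by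
  rcases K.eq_empty_or_nonempty with rfl | hne
  · exact Eventually.of_forall fun _ x hx => absurd hx (Set.notMem_empty x)
  obtain ⟨x₀, hx₀, hmin⟩ := hK.exists_isMinOn hne hf
  filter_upwards [Ioc_mem_nhdsGT (sub_pos.2 (hr x₀ hx₀))] with ε hε x hx
  linarith [hε.2, isMinOn_iff.1 hmin x hx]

section Codebooks

variable {d k : ℕ}

lemma norm_le_sqrt_sum_sq_of_abs_apply_le {Mb : Fin d → ℝ} {y : EuclideanSpace ℝ (Fin d)}
    (hy : ∀ p, |y p| ≤ Mb p) : ‖y‖ ≤ √(∑ p, Mb p ^ 2) := by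
  rw [EuclideanSpace.norm_eq]
  gcongr with p
  rw [Real.norm_eq_abs]
  exact hy p

lemma norm_le_of_mem_Ck {Mb : Fin d → ℝ} {c : Fin k → EuclideanSpace ℝ (Fin d)}
    (hc : c ∈ Ck k Mb) (j : Fin k) : ‖c j‖ ≤ √(∑ p, Mb p ^ 2) :=
  norm_le_sqrt_sum_sq_of_abs_apply_le (hc j)

lemma isCompact_Ck (k : ℕ) (Mb : Fin d → ℝ) : IsCompact (Ck k Mb) := by
  refine Metric.isCompact_of_isClosed_isBounded ?_ ?_
  · have : Ck k Mb = ⋂ j, ⋂ p, {c : Fin k → EuclideanSpace ℝ (Fin d) | |c j p| ≤ Mb p} := by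
      ext c; simp [Ck]
    rw [this]
    exact isClosed_iInter fun j => isClosed_iInter fun p => isClosed_le (by fun_prop) (by fun_prop)
  · refine isBounded_iff_forall_norm_le.2 ⟨√(∑ p, Mb p ^ 2), fun c hc => ?_⟩
    exact (pi_norm_le_iff_of_nonneg (Real.sqrt_nonneg _)).2 (norm_le_of_mem_Ck hc)

lemma isClosed_setOf_supp_subset (S : Set (Fin d)) :
    IsClosed {c : Fin k → EuclideanSpace ℝ (Fin d) | supp c ⊆ S} := by
  have : {c : Fin k → EuclideanSpace ℝ (Fin d) | supp c ⊆ S} =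
      ⋂ j, ⋂ p ∈ Sᶜ, {c | c j p = 0} := by
    ext c
    simp only [supp, Set.subset_def, Set.mem_ofPred_eq, Set.mem_iInter, Set.mem_compl_iff]
    exact ⟨fun h j p hp => by_contra fun hne => hp (h p ⟨j, hne⟩),
      fun h p ⟨j, hne⟩ => by_contra fun hp => hne (h j p hp)⟩
  rw [this]
  exact isClosed_iInter fun j => isClosed_biInter fun p _ => isClosed_eq (by fun_prop) (by fun_prop)

lemma distsq_le {R : ℝ} {c c' : Fin k → EuclideanSpace ℝ (Fin d)}
    (hc : ∀ j, ‖c j‖ ≤ R) (hc' : ∀ j, ‖c' j‖ ≤ R) : distsq c c' ≤ k * (2 * R) ^ 2 := by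
  calc distsq c c' ≤ ∑ _j : Fin k, (2 * R) ^ 2 := Finset.sum_le_sum fun j _ => by
        gcongr; exact (norm_sub_le _ _).trans (by linarith [hc j, hc' j])
    _ = k * (2 * R) ^ 2 := by simp

lemma gammaF_le (c : Fin k → EuclideanSpace ℝ (Fin d)) (x : EuclideanSpace ℝ (Fin d))
    (j : Fin k) : gammaF c x ≤ ‖x - c j‖ ^ 2 :=
  ciInf_le (Finite.bddBelow_range _) j

lemma gammaF_nonneg (c : Fin k → EuclideanSpace ℝ (Fin d)) (x : EuclideanSpace ℝ (Fin d)) :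
    0 ≤ gammaF c x :=
  Real.iInf_nonneg fun _ => by positivity

lemma measurable_gammaF (c : Fin k → EuclideanSpace ℝ (Fin d)) : Measurable (gammaF c) :=
  Measurable.iInf fun _ => by fun_prop

lemma sq_norm_sub_sq_norm_le {E : Type*} [SeminormedAddCommGroup E] (a b : E) :
    ‖a‖ ^ 2 - ‖b‖ ^ 2 ≤ ‖a - b‖ * (‖a‖ + ‖b‖) := by
  rw [sq_sub_sq, mul_comm (‖a‖ + ‖b‖)]
  gcongr
  exact norm_sub_norm_le a b

variable [NeZero k] {R : ℝ} {c c' : Fin k → EuclideanSpace ℝ (Fin d)}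

lemma gammaF_le_gammaF_add {x : EuclideanSpace ℝ (Fin d)} (hx : ‖x‖ ≤ R)
    (hc : ∀ j, ‖c j‖ ≤ R) (hc' : ∀ j, ‖c' j‖ ≤ R) :
    gammaF c x ≤ gammaF c' x + 4 * R * dist c c' := by
  rw [← sub_le_iff_le_add]
  refine le_ciInf fun j => ?_
  have hsq := sq_norm_sub_sq_norm_le (x - c j) (x - c' j)
  rw [sub_sub_sub_cancel_left] at hsq
  have hdist : ‖c' j - c j‖ ≤ dist c c' := by
    rw [← dist_eq_norm, dist_comm]
    exact dist_le_pi_dist c c' j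
  have hsum : ‖x - c j‖ + ‖x - c' j‖ ≤ 4 * R := by
    linarith [norm_sub_le x (c j), norm_sub_le x (c' j), hc j, hc' j]
  have hprod : ‖c' j - c j‖ * (‖x - c j‖ + ‖x - c' j‖) ≤ 4 * R * dist c c' := by
    rw [mul_comm (4 * R)]
    gcongr
  linarith [gammaF_le c x j]

lemma integrable_gammaF {P : Measure (EuclideanSpace ℝ (Fin d))} [IsFiniteMeasure P]
    (hP : ∀ᵐ x ∂P, ‖x‖ ≤ R) (hc : ∀ j, ‖c j‖ ≤ R) : Integrable (gammaF c) P := by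
  refine Integrable.of_bound (measurable_gammaF c).aestronglyMeasurable ((2 * R) ^ 2) ?_
  filter_upwards [hP] with x hx
  rw [Real.norm_of_nonneg (gammaF_nonneg c x)]
  refine (gammaF_le c x 0).trans ?_
  gcongr
  linarith [norm_sub_le x (c 0), hc 0]

lemma lipschitzOnWith_distortion {P : Measure (EuclideanSpace ℝ (Fin d))}
    [IsProbabilityMeasure P] (hP : ∀ᵐ x ∂P, ‖x‖ ≤ R) :
    LipschitzOnWith (4 * R).toNNReal (distortion P)
      {c : Fin k → EuclideanSpace ℝ (Fin d) | ∀ j, ‖c j‖ ≤ R} := by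
  refine LipschitzOnWith.of_dist_le' fun c hc c' hc' => ?_
  have hpointwise : ∀ᵐ x ∂P, ‖gammaF c x - gammaF c' x‖ ≤ 4 * R * dist c c' := by
    filter_upwards [hP] with x hx
    rw [Real.norm_eq_abs, abs_sub_le_iff]
    exact ⟨sub_left_le_of_le_add (gammaF_le_gammaF_add hx hc hc'),
      sub_left_le_of_le_add (dist_comm c c' ▸ gammaF_le_gammaF_add hx hc' hc)⟩
  rw [dist_eq_norm, distortion, distortion, ← integral_sub (integrable_gammaF hP hc)
    (integrable_gammaF hP hc')]
  simpa using norm_integral_le_of_norm_le_const hpointwise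

end Codebooks

theorem exists_kappa_of_no_subcodebook_general
    (d k : ℕ) (hk : 0 < k)
    (P : Measure (EuclideanSpace ℝ (Fin d))) [IsProbabilityMeasure P]
    (Mb : Fin d → ℝ)
    (hbound : ∀ p : Fin d, ∀ᵐ x ∂P, |x p| ≤ Mb p)
    -- `𝓜` is finite, nonempty, and contained in `C^k`
    (hfin : (optSet P k).Finite)
    (hsub : optSet P k ⊆ Ck k Mb)
    -- Assumption 1: no optimal codebook has support strictly contained in the support of
    -- another optimal codebook
    (hass : ∀ cs ∈ optSet P k, ∀ c ∈ Ck k Mb,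
      supp c ⊂ supp cs → distortion P cs < distortion P c) :
    ∃ κ : ℝ, 0 < κ ∧ ∀ cs ∈ optSet P k, ∀ c ∈ Ck k Mb,
      supp c ⊂ supp cs →
        distsq c cs ≤ κ * (distortion P c - distortion P cs) := by
  have : NeZero k := ⟨hk.ne'⟩
  set R := √(∑ p, Mb p ^ 2)
  have hP : ∀ᵐ x ∂P, ‖x‖ ≤ R := by
    filter_upwards [ae_all_iff.2 hbound] with x hx
    exact norm_le_sqrt_sum_sq_of_abs_apply_le hx
  have hcont : ContinuousOn (distortion P) (Ck k Mb) :=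
    (lipschitzOnWith_distortion hP).continuousOn.mono fun c hc => norm_le_of_mem_Ck hc
  have hgap : ∀ᶠ ε in 𝓝[>] 0, ∀ cs ∈ optSet P k, ∀ S : Set (Fin d), S ⊂ supp cs →
      ∀ c ∈ Ck k Mb ∩ {c | supp c ⊆ S}, distortion P cs + ε ≤ distortion P c := by
    refine (eventually_all_finite hfin).2 fun cs hcs => eventually_all.2 fun S =>
      eventually_imp_distrib_left.2 fun hS => ?_
    have hK := (isCompact_Ck k Mb).inter_right (isClosed_setOf_supp_subset S)
    exact hK.eventually_forall_add_le_of_lt (hcont.mono Set.inter_subset_left)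
      fun c hc => hass cs hcs c hc.1 (hc.2.trans_ssubset hS)
  obtain ⟨ε, hε, hεpos⟩ := (hgap.and self_mem_nhdsWithin).exists
  refine ⟨(k * (2 * R) ^ 2 + 1) / ε, div_pos (by positivity) hεpos, fun cs hcs c hc hS => ?_⟩
  have hloss := hε cs hcs (supp c) hS c ⟨hc, Set.Subset.rfl⟩
  calc distsq c cs ≤ k * (2 * R) ^ 2 + 1 :=
        (distsq_le (norm_le_of_mem_Ck hc) (norm_le_of_mem_Ck (hsub hcs))).trans (by linarith)
    _ = (k * (2 * R) ^ 2 + 1) / ε * ε := (div_mul_cancel₀ _ hεpos.ne').symm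
    _ ≤ _ := by gcongr; linarith

/-- third part of Proposition `TMC`: if `𝓜` is finite and nonempty and no
optimal codebook has support strictly contained in the support of another optimal codebook,
then there is `κ₀'' > 0` with `‖c − c*‖² ≤ κ₀'' ℓ(c, c*)` whenever `S(c) ⊊ S(c*)`. -/
theorem exists_kappa_of_no_subcodebook
    (d k : ℕ) (hd : 0 < d) (hk : 0 < k)
    (P : Measure (EuclideanSpace ℝ (Fin d))) [IsProbabilityMeasure P]
    (Mb : Fin d → ℝ) (hMb : ∀ p, 0 ≤ Mb p)
    (hbound : ∀ p : Fin d, ∀ᵐ x ∂P, |x p| ≤ Mb p)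
    -- `𝓜` is finite, nonempty, and contained in `C^k`
    (hfin : (optSet P k).Finite) (hne : (optSet P k).Nonempty)
    (hsub : optSet P k ⊆ Ck k Mb)
    -- Assumption 1: no optimal codebook has support strictly contained in the support of
    -- another optimal codebook
    (hass : ∀ cs ∈ optSet P k, ∀ c ∈ Ck k Mb,
      supp c ⊂ supp cs → distortion P cs < distortion P c) :
    ∃ κ : ℝ, 0 < κ ∧ ∀ cs ∈ optSet P k, ∀ c ∈ Ck k Mb,
      supp c ⊂ supp cs →
        distsq c cs ≤ κ * (distortion P c - distortion P cs) :=
  exists_kappa_of_no_subcodebook_general d k hk P Mb hbound hfin hsub hass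

end
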